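/- arXiv:0910.3688 — 4 statements merged into one kernel-verified Lean document; each statement's English description precedes it below -/
import Mathlib

section
/- Let X be a second countable compact Hausdorff space and P a Markov operator on C(X) with representing kernel p. If U ⊆ X is an open set that is hereditary for P, then P maps the ideal of continuous functions vanishing on K = X \ U into itself: for every continuous f : X → ℂ with f = 0 on K, the function Pf vanishes on K (so P restricts to a Markov operator on C(K)). -/
/-!
A point `y` outside a hereditary open set `U` has no support pair `(x, y)` with `x ∈ U`,
so every `x ∈ U` has an open neighbourhood of `p y`-measure zero; by second countability
countably many of them cover `U`, hence `p y U = 0` and any `f` vanishing off `U` integrates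
to zero against `p y`.
-/

open MeasureTheory Topology

/-- The support of a Markov operator given by the kernel `p`. -/
def markovSupp {X : Type*} [TopologicalSpace X] [MeasurableSpace X]
    (p : X → Measure X) : Set (X × X) :=
  {q : X × X | ¬ ∃ U V : Set X, IsOpen U ∧ IsOpen V ∧ q.1 ∈ U ∧ q.2 ∈ V ∧
      ∀ y ∈ V, p y U = 0}

theorem measure_eq_zero_of_forall_notMem_markovSupp {X : Type*} [TopologicalSpace X]
    [SecondCountableTopology X] [MeasurableSpace X] (p : X → Measure X) {U : Set X} {y : X}
    (h : ∀ x ∈ U, (x, y) ∉ markovSupp p) : p y U = 0 := by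
  refine measure_null_of_locally_null U fun x hx => ?_
  have hxy := h x hx
  simp only [markovSupp, Set.mem_ofPred_eq, not_not] at hxy
  obtain ⟨W, V, hW, -, hxW, hyV, hnull⟩ := hxy
  exact ⟨W, mem_nhdsWithin_of_mem_nhds (hW.mem_nhds hxW), hnull y hyV⟩

theorem stmt1_general {X : Type*} [TopologicalSpace X]
    [SecondCountableTopology X] [MeasurableSpace X]
    (p : X → Measure X)
    (U : Set X)
    (hher : ∀ x y : X, (x, y) ∈ markovSupp p → x ∈ U → y ∈ U)
    (f : C(X, ℂ)) (hf : ∀ x ∈ Uᶜ, f x = 0) :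
    ∀ y ∈ Uᶜ, (∫ x, f x ∂(p y)) = 0 := by
  intro y hy
  have hU : p y U = 0 :=
    measure_eq_zero_of_forall_notMem_markovSupp p fun x hx hxy => hy (hher x y hxy hx)
  have hf_ae : f =ᵐ[p y] 0 :=
    measure_mono_null (fun x hfx => by_contra fun hxU => hfx (hf x hxU)) hU
  simpa using integral_congr_ae hf_ae

theorem stmt1 {X : Type*} [TopologicalSpace X] [CompactSpace X] [T2Space X]
    [SecondCountableTopology X] [MeasurableSpace X] [BorelSpace X]
    (p : X → Measure X) (hprob : ∀ y, IsProbabilityMeasure (p y))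
    (hcont : ∀ f : C(X, ℂ), Continuous fun y => ∫ x, f x ∂(p y))
    (U : Set X) (hU : IsOpen U)
    (hher : ∀ x y : X, (x, y) ∈ markovSupp p → x ∈ U → y ∈ U)
    (f : C(X, ℂ)) (hf : ∀ x ∈ Uᶜ, f x = 0) :
    ∀ y ∈ Uᶜ, (∫ x, f x ∂(p y)) = 0 :=
  stmt1_general p U hher f hf
end

section
/- Let X be a second countable compact Hausdorff space and P a Markov operator on C(X) with representing kernel p. If B ⊆ X is a closed set that is strongly absorbing for P, then B is absorbing for P: p(B,y) = 1 for every y ∈ B. -/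
open MeasureTheory Topology

/-- A set `B` is strongly absorbing for the Markov kernel `p` if a point `x` belongs to
the complement of `B` exactly when there are an open neighborhood `V` of `x` and an open
set `W ⊇ B` such that `p(V, y) = 0` for all `y ∈ W`. -/
def StronglyAbsorbing {X : Type*} [TopologicalSpace X] [MeasurableSpace X]
    (p : X → Measure X) (B : Set X) : Prop :=
  ∀ x : X, x ∈ Bᶜ ↔ ∃ V W : Set X, IsOpen V ∧ x ∈ V ∧ IsOpen W ∧ B ⊆ W ∧
      ∀ y ∈ W, p y V = 0

/-
Each point outside `B` has an open neighbourhood that is `p y`-null for every `y` near `B`, in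
particular for every `y ∈ B`. By second countability countably many of these neighbourhoods
cover `Bᶜ`, so `p(Bᶜ, y) = 0`.
-/

theorem StronglyAbsorbing.measure_compl_eq_zero {X : Type*} [TopologicalSpace X]
    [SecondCountableTopology X] [MeasurableSpace X] {p : X → Measure X} {B : Set X}
    (hstr : StronglyAbsorbing p B) {y : X} (hy : y ∈ B) : p y Bᶜ = 0 := by
  refine measure_null_of_locally_null _ fun x hx => ?_
  obtain ⟨V, W, hV, hxV, -, hBW, hVnull⟩ := (hstr x).mp hx
  exact ⟨V, mem_nhdsWithin_of_mem_nhds (hV.mem_nhds hxV), hVnull y (hBW hy)⟩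

theorem stmt5_general {X : Type*} [TopologicalSpace X]
    [SecondCountableTopology X] [MeasurableSpace X] [BorelSpace X]
    (p : X → Measure X) (hprob : ∀ y, IsProbabilityMeasure (p y))
    (B : Set X) (hB : IsClosed B) (hstr : StronglyAbsorbing p B) :
    ∀ y ∈ B, p y B = 1 := by
  intro y hy
  have := hprob y
  exact (prob_compl_eq_zero_iff hB.measurableSet).mp (hstr.measure_compl_eq_zero hy)

theorem stmt5 {X : Type*} [TopologicalSpace X] [CompactSpace X] [T2Space X]
    [SecondCountableTopology X] [MeasurableSpace X] [BorelSpace X]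
    (p : X → Measure X) (hprob : ∀ y, IsProbabilityMeasure (p y))
    (hcont : ∀ f : C(X, ℂ), Continuous fun y => ∫ x, f x ∂(p y))
    (B : Set X) (hB : IsClosed B) (hstr : StronglyAbsorbing p B) :
    ∀ y ∈ B, p y B = 1 :=
  stmt5_general p hprob B hB hstr
end

section
/- Let X be a second countable compact Hausdorff space and P a Markov operator on C(X) with representing kernel p. If U ⊆ X is an open set that is hereditary for P, then for every x ∈ U there exist an open neighborhood V of x and an open set W containing K = X \ U such that p(V,y) = 0 for all y ∈ W. -/
open MeasureTheory Topology

theorem IsCompact.exists_isOpen_null_of_notMem_markovSupp {X : Type*} [TopologicalSpace X]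
    [MeasurableSpace X] {p : X → Measure X} {x : X} {K : Set X} (hK : IsCompact K)
    (hK_supp : ∀ y ∈ K, (x, y) ∉ markovSupp p) :
    ∃ V W : Set X, IsOpen V ∧ x ∈ V ∧ IsOpen W ∧ K ⊆ W ∧ ∀ y ∈ W, p y V = 0 := by
  refine hK.induction_on (p := fun S => ∃ V W : Set X, IsOpen V ∧ x ∈ V ∧ IsOpen W ∧ S ⊆ W ∧
    ∀ y ∈ W, p y V = 0) ?empty ?mono ?union ?nhds
  case empty => exact ⟨Set.univ, ∅, isOpen_univ, trivial, isOpen_empty, subset_rfl, by simp⟩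
  case mono =>
    rintro S T hST ⟨V, W, hV, hxV, hW, hTW, hnull⟩
    exact ⟨V, W, hV, hxV, hW, hST.trans hTW, hnull⟩
  case union =>
    rintro S T ⟨V₁, W₁, hV₁, hxV₁, hW₁, hSW₁, hnull₁⟩ ⟨V₂, W₂, hV₂, hxV₂, hW₂, hTW₂, hnull₂⟩
    refine ⟨V₁ ∩ V₂, W₁ ∪ W₂, hV₁.inter hV₂, ⟨hxV₁, hxV₂⟩, hW₁.union hW₂,
      Set.union_subset_union hSW₁ hTW₂, ?_⟩
    rintro y (hy | hy)
    · exact measure_mono_null Set.inter_subset_left (hnull₁ y hy)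
    · exact measure_mono_null Set.inter_subset_right (hnull₂ y hy)
  case nhds =>
    intro y hy
    obtain ⟨V, W, hV, hW, hxV, hyW, hnull⟩ := not_not.mp (hK_supp y hy)
    exact ⟨W, mem_nhdsWithin_of_mem_nhds (hW.mem_nhds hyW), V, W, hV, hxV, hW, subset_rfl, hnull⟩

theorem stmt7_general {X : Type*} [TopologicalSpace X] [CompactSpace X]
    [MeasurableSpace X]
    (p : X → Measure X)
    (U : Set X) (hU : IsOpen U)
    (hher : ∀ x y : X, (x, y) ∈ markovSupp p → x ∈ U → y ∈ U) :
    ∀ x ∈ U, ∃ V W : Set X, IsOpen V ∧ x ∈ V ∧ IsOpen W ∧ Uᶜ ⊆ W ∧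
      ∀ y ∈ W, p y V = 0 := fun x hx =>
  hU.isClosed_compl.isCompact.exists_isOpen_null_of_notMem_markovSupp
    fun y hy hxy => hy (hher x y hxy hx)

theorem stmt7 {X : Type*} [TopologicalSpace X] [CompactSpace X] [T2Space X]
    [SecondCountableTopology X] [MeasurableSpace X] [BorelSpace X]
    (p : X → Measure X) (hprob : ∀ y, IsProbabilityMeasure (p y))
    (hcont : ∀ f : C(X, ℂ), Continuous fun y => ∫ x, f x ∂(p y))
    (U : Set X) (hU : IsOpen U)
    (hher : ∀ x y : X, (x, y) ∈ markovSupp p → x ∈ U → y ∈ U) :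
    ∀ x ∈ U, ∃ V W : Set X, IsOpen V ∧ x ∈ V ∧ IsOpen W ∧ Uᶜ ⊆ W ∧
      ∀ y ∈ W, p y V = 0 :=
  stmt7_general p U hU hher
end

section
/- Let (f₁, …, f_N) be an iterated function system on a compact metric space X with invariant set X, and let P be the associated Markov operator with kernel p(·,y) = (1/N)·Σᵢ δ_{fᵢ(y)}. Then the only open subsets of X that are hereditary for P are X and the empty set. -/
/-!
A hereditary open set `U` is backward invariant: `fᵢ y ∈ U` forces `y ∈ U`, because
`(fᵢ y, y)` lies in the support of `P`. Since the maps are uniform contractions whose images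
cover `X`, every point `t` is within `r ^ k * diam X` of some image of a given point `x` under a
word of length `k` (pull `t` back `k` times and push `x` forward along the same word), so the
forward orbit of every `x` is dense. A nonempty open `U` therefore meets the orbit of `x`, and
backward invariance carries membership in `U` back to `x`.
-/

open MeasureTheory Topology

theorem exists_lipschitzWith_lt_one_of_forall {ι X : Type*} [Fintype ι] [PseudoEMetricSpace X]
    {f : ι → X → X} (hf : ∀ i, ∃ K : NNReal, K < 1 ∧ LipschitzWith K (f i)) :
    ∃ r : NNReal, r < 1 ∧ ∀ i, LipschitzWith r (f i) := by
  choose K hK_lt hK using hf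
  exact ⟨Finset.univ.sup K, Finset.sup_lt_iff zero_lt_one |>.2 fun i _ => hK_lt i,
    fun i => (hK i).weaken (Finset.le_sup (Finset.mem_univ i))⟩

section Orbit

variable {ι X : Type*}

theorem mem_of_reflTransGen_of_preimage_subset (f : ι → X → X) {S : Set X}
    (hS : ∀ i, f i ⁻¹' S ⊆ S) {x z : X}
    (hxz : Relation.ReflTransGen (fun a b => ∃ i, f i a = b) x z) (hz : z ∈ S) : x ∈ S := by
  induction hxz with
  | refl => exact hz
  | tail _ hstep ih =>
    obtain ⟨i, rfl⟩ := hstep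
    exact ih (hS i hz)

variable [PseudoMetricSpace X] [BoundedSpace X] {f : ι → X → X} {r : NNReal}

theorem exists_reflTransGen_dist_le (hf : ∀ i, LipschitzWith r (f i))
    (hcover : ⋃ i, Set.range (f i) = Set.univ) (k : ℕ) (x t : X) :
    ∃ z, Relation.ReflTransGen (fun a b => ∃ i, f i a = b) x z ∧
      dist z t ≤ r ^ k * Metric.diam (Set.univ : Set X) := by
  induction k generalizing t with
  | zero =>
    exact ⟨x, .refl, by
      simpa using Metric.dist_le_diam_of_mem BoundedSpace.bounded_univ trivial trivial⟩
  | succ k ih =>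
    obtain ⟨i, y, rfl⟩ := Set.mem_iUnion.1 (hcover.symm ▸ Set.mem_univ t)
    obtain ⟨z, hxz, hzy⟩ := ih y
    refine ⟨f i z, hxz.tail ⟨i, rfl⟩, ?_⟩
    calc dist (f i z) (f i y) ≤ r * dist z y := (hf i).dist_le_mul z y
      _ ≤ r * (r ^ k * Metric.diam (Set.univ : Set X)) := by gcongr
      _ = r ^ (k + 1) * Metric.diam (Set.univ : Set X) := by ring

theorem dense_reflTransGen (hf : ∀ i, LipschitzWith r (f i)) (hr : r < 1)
    (hcover : ⋃ i, Set.range (f i) = Set.univ) (x : X) :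
    Dense {z | Relation.ReflTransGen (fun a b => ∃ i, f i a = b) x z} := by
  refine Metric.dense_iff.2 fun t ε hε => ?_
  have hlim : Filter.Tendsto (fun k : ℕ => (r : ℝ) ^ k * Metric.diam (Set.univ : Set X))
      Filter.atTop (𝓝 0) := by
    simpa using (tendsto_pow_atTop_nhds_zero_of_lt_one r.coe_nonneg hr).mul_const
      (Metric.diam (Set.univ : Set X))
  obtain ⟨k, hk⟩ := (hlim.eventually (gt_mem_nhds hε)).exists
  obtain ⟨z, hxz, hzt⟩ := exists_reflTransGen_dist_le hf hcover k x t
  exact ⟨z, Metric.mem_ball.2 (hzt.trans_lt hk), hxz⟩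

theorem eq_univ_of_preimage_subset (hf : ∀ i, LipschitzWith r (f i)) (hr : r < 1)
    (hcover : ⋃ i, Set.range (f i) = Set.univ) {U : Set X} (hU : IsOpen U)
    (hne : U.Nonempty) (hpre : ∀ i, f i ⁻¹' U ⊆ U) : U = Set.univ := by
  refine Set.eq_univ_of_forall fun x => ?_
  obtain ⟨z, hxz, hzU⟩ := (dense_reflTransGen hf hr hcover x).exists_mem_open hU hne
  exact mem_of_reflTransGen_of_preimage_subset f hpre hxz hzU

end Orbit

theorem mk_mem_markovSupp {X : Type*} [TopologicalSpace X] [MeasurableSpace X]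
    {p : X → Measure X} {x y : X} (h : ∀ U, IsOpen U → x ∈ U → p y U ≠ 0) :
    (x, y) ∈ markovSupp p :=
  fun ⟨U, _, hU, _, hxU, hyV, hzero⟩ => h U hU hxU (hzero y hyV)

theorem mem_markovSupp_of_eq_smul_sum_dirac {X ι : Type*} [TopologicalSpace X]
    [MeasurableSpace X] [Fintype ι] {f : ι → X → X} {p : X → Measure X} {c : ENNReal}
    (hc : c ≠ 0) (hp : ∀ y, p y = c • ∑ i, Measure.dirac (f i y)) (i : ι) (y : X) :
    (f i y, y) ∈ markovSupp p := by
  refine mk_mem_markovSupp fun U _ hU => ?_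
  simpa [hp, Measure.finsetSum_apply, hc] using ⟨i, Measure.dirac_apply_of_mem hU⟩

theorem stmt18_general {X : Type*} [MetricSpace X] [CompactSpace X]
    [MeasurableSpace X]
    {N : ℕ} (f : Fin N → X → X)
    (hcontr : ∀ i, ∃ K : NNReal, K < 1 ∧ LipschitzWith K (f i))
    (hinv : (⋃ i : Fin N, Set.range (f i)) = Set.univ)
    (p : X → Measure X)
    (hp : ∀ y : X, p y = (N : ENNReal)⁻¹ • ∑ i : Fin N, Measure.dirac (f i y)) :
    ∀ U : Set X, IsOpen U →
      (∀ x y : X, (x, y) ∈ markovSupp p → x ∈ U → y ∈ U) →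
      U = Set.univ ∨ U = ∅ := by
  intro U hU hher
  obtain ⟨r, hr, hf⟩ := exists_lipschitzWith_lt_one_of_forall hcontr
  have hsupp :=
    mem_markovSupp_of_eq_smul_sum_dirac (ENNReal.inv_ne_zero.2 (ENNReal.natCast_ne_top N)) hp
  rcases U.eq_empty_or_nonempty with hempty | hne
  · exact Or.inr hempty
  · exact Or.inl <| eq_univ_of_preimage_subset hf hr hinv hU hne
      fun i y hy => hher _ _ (hsupp i y) hy

theorem stmt18 {X : Type*} [MetricSpace X] [CompactSpace X] [Nonempty X]
    [MeasurableSpace X] [BorelSpace X]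
    {N : ℕ} (hN : 2 ≤ N) (f : Fin N → X → X)
    (hinj : ∀ i, Function.Injective (f i))
    (hcontr : ∀ i, ∃ K : NNReal, K < 1 ∧ LipschitzWith K (f i))
    (hinv : (⋃ i : Fin N, Set.range (f i)) = Set.univ)
    (p : X → Measure X)
    (hp : ∀ y : X, p y = (N : ENNReal)⁻¹ • ∑ i : Fin N, Measure.dirac (f i y)) :
    ∀ U : Set X, IsOpen U →
      (∀ x y : X, (x, y) ∈ markovSupp p → x ∈ U → y ∈ U) →
      U = Set.univ ∨ U = ∅ :=
  stmt18_general f hcontr hinv p hp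
end
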